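/- arXiv:2012.07782 — 2 statements merged into one kernel-verified Lean document; each statement's English description precedes it below -/
import Mathlib

section
/- limsup_{n→∞} (2π/n)·log|F_n| ≤ 32·Λ(π/4) (= 4·v_oct, where 4 is the number of crossings of the 2-by-2 square weave). [Proposition 6.1 of the paper, specialized to the explicit state sum for the 2-by-2 square weave.] -/
/-!
Since `|{k}!_n| = ∏_{j ≤ k} |2 sin (jπ/n)|`, the number `(π/n) log |{k}!_n|` is a right Riemann
sum of `log |2 sin|` on `[0, kπ/n]`; as this function is integrable, increasing on `(0, π/2]` and
decreasing on `[π/2, π)`, the sum equals `-Λ(kπ/n) + o(1)` uniformly in `k < n`. Hence each of the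
at most `n⁵` terms of `F_n` has modulus
`exp ((n/π) (∑_{x = a,b,c,d} (Λ μ + 2 Λ ξ - 2 Λ (ξ + μ)) + o(1)))` with `ξ = xπ/n`, `μ = mπ/n`,
and each summand is at most `4 Λ(π/4)`. Indeed, for fixed `μ` the integral `Λ ξ - Λ (ξ + μ)` of
`log |2 sin|` over a window of length `μ` is largest for the window centred at `π/2`, where it is
`2 Λ ((π - μ)/2)`; and by the duplication formula `μ ↦ Λ μ + 4 Λ ((π - μ)/2)` has derivative
`log |2 cos (μ/2)| - log |2 sin (μ/2)|`, so it peaks at `μ = π/2`.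
-/

open Finset Filter Real Complex

/-- The quantum integer factorial `{k}!_n = ∏_{j=1}^k 2i sin(jπ/n)`. -/
noncomputable def qf (n k : ℕ) : ℂ :=
  ∏ j ∈ Finset.Icc 1 k, (2 * Complex.I * Complex.sin ((j : ℂ) * Real.pi / n))

/-- The state sum `F_n = J_n^T(W; e^{2πi/n})` for the 2-by-2 square weave. -/
noncomputable def F (n : ℕ) : ℂ :=
  ∑ m ∈ Finset.range n, ∑ a ∈ Finset.range (n - m), ∑ b ∈ Finset.range (n - m),
    ∑ c ∈ Finset.range (n - m), ∑ d ∈ Finset.range (n - m),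
      Complex.exp (2 * Real.pi * Complex.I * ((a : ℂ) - c) * ((d : ℂ) - b) / n) *
        ((qf n m)⁻¹) ^ 4 *
        ((qf n (a + m) * qf n (b + m) * qf n (c + m) * qf n (d + m)) /
            (qf n a * qf n b * qf n c * qf n d)) ^ 2

/-- The Lobachevsky function `Λ(x) = -∫₀ˣ log|2 sin t| dt`. -/
noncomputable def lob (x : ℝ) : ℝ := -∫ t in (0:ℝ)..x, Real.log |2 * Real.sin t|

open MeasureTheory Set intervalIntegral
open scoped Topology

lemma limsup_le_of_eventually_le_of_tendsto {α : Type*} {f : Filter α} [f.NeBot] {u v : α → ℝ}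
    {L : ℝ} (hL : 0 ≤ L) (huv : ∀ᶠ x in f, u x ≤ v x) (hv : Tendsto v f (𝓝 L)) :
    limsup u f ≤ L := by
  -- `0 ≤ L` covers the junk value `limsup u f = 0` when `u` is not cobounded, e.g. `u → -∞`
  by_cases hco : IsCoboundedUnder (· ≤ ·) f u
  · exact (limsup_le_limsup huv hco hv.isBoundedUnder_le).trans hv.limsup_eq.le
  · have hunbdd : ¬BddBelow {a | ∀ᶠ x in f, u x ≤ a} := fun ⟨b, hb⟩ =>
      hco ⟨b, fun a ha => hb (by simpa [eventually_map] using ha)⟩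
    rwa [limsup_eq, Real.sInf_of_not_bddBelow hunbdd]

lemma norm_sum_le_of_card_le {ι E : Type*} [SeminormedAddCommGroup E] {s : Finset ι} {f : ι → E}
    {N : ℕ} {B : ℝ} (hs : s.card ≤ N) (hB : 0 ≤ B) (h : ∀ i ∈ s, ‖f i‖ ≤ B) :
    ‖∑ i ∈ s, f i‖ ≤ N * B := by
  calc ‖∑ i ∈ s, f i‖ ≤ ∑ i ∈ s, ‖f i‖ := norm_sum_le _ _
    _ ≤ s.card * B := by simpa using sum_le_card_nsmul s _ B h
    _ ≤ N * B := by gcongr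

section RightRiemannSum

variable {f : ℝ → ℝ} {h : ℝ} {a b c : ℕ}

noncomputable def rightSumError (f : ℝ → ℝ) (h : ℝ) (a b : ℕ) : ℝ :=
  h * ∑ i ∈ Ioc a b, f (i * h) - ∫ x in a * h..b * h, f x

lemma rightSumError_add (hab : a ≤ b) (hbc : b ≤ c)
    (hf : ∀ x y, IntervalIntegrable f volume x y) :
    rightSumError f h a b + rightSumError f h b c = rightSumError f h a c := by
  have := integral_add_adjacent_intervals (hf (a * h) (b * h)) (hf (b * h) (c * h))
  rw [rightSumError, rightSumError, rightSumError, ← sum_Ioc_consecutive _ hab hbc, mul_add]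
  linarith

lemma MonotoneOn.abs_rightSumError_le (hh : 0 < h) (hab : a ≤ b)
    (hf : MonotoneOn f (Icc (a * h) (b * h))) :
    |rightSumError f h a b| ≤ h * (f (b * h) - f (a * h)) := by
  -- rescale to mesh `1`, where Mathlib compares sums and integrals of monotone functions
  set F : ℝ → ℝ := fun u => f (u * h)
  have hF : MonotoneOn F (Icc (a : ℝ) b) :=
    hf.comp (fun _ _ _ _ hxy => mul_le_mul_of_nonneg_right hxy hh.le) fun _ hx =>
      ⟨mul_le_mul_of_nonneg_right hx.1 hh.le, mul_le_mul_of_nonneg_right hx.2 hh.le⟩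
  have hint : ∫ x in a * h..b * h, f x = h * ∫ u in (a : ℝ)..b, F u := by
    rw [integral_comp_mul_right f hh.ne', smul_eq_mul, mul_inv_cancel_left₀ hh.ne']
  have hright : ∑ i ∈ Ico a b, F ↑(i + 1) = ∑ i ∈ Ioc a b, F i := by
    rw [← Finset.Ico_add_one_add_one_eq_Ioc, ← sum_Ico_add']
  have htele : h * ∑ i ∈ Ico a b, F ↑(i + 1) - h * ∑ i ∈ Ico a b, F i = h * (F b - F a) := by
    rw [← mul_sub, ← sum_sub_distrib, sum_Ico_sub (fun i : ℕ => F i) hab]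
  have hlow := mul_le_mul_of_nonneg_left (hF.sum_le_integral_Ico hab) hh.le
  have hup := mul_le_mul_of_nonneg_left (hF.integral_le_sum_Ico hab) hh.le
  rw [rightSumError, hint, ← hright, abs_le]
  constructor <;> linarith

lemma AntitoneOn.abs_rightSumError_le (hh : 0 < h) (hab : a ≤ b)
    (hf : AntitoneOn f (Icc (a * h) (b * h))) :
    |rightSumError f h a b| ≤ h * (f (a * h) - f (b * h)) := by
  have hneg : rightSumError (fun x => -f x) h a b = -rightSumError f h a b := by
    simp only [rightSumError, sum_neg_distrib, intervalIntegral.integral_neg]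
    ring
  have := hf.neg.abs_rightSumError_le hh hab
  rwa [hneg, abs_neg, neg_sub_neg] at this

lemma abs_rightSumError_succ_le {C : ℝ} (hh : 0 ≤ h)
    (hf : ∀ x ∈ Icc (a * h) ((a + 1) * h), |f x| ≤ C) :
    |rightSumError f h a (a + 1)| ≤ 2 * h * C := by
  have hmesh : (a : ℝ) * h ≤ (a + 1) * h := by nlinarith
  have hval : |f ((a + 1) * h)| ≤ C := hf _ ⟨hmesh, le_rfl⟩
  have hint : ‖∫ x in a * h..(a + 1) * h, f x‖ ≤ C * |(a + 1) * h - a * h| :=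
    norm_integral_le_of_norm_le_const fun x hx => hf x (uIoc_subset_uIcc.trans
      (uIcc_of_le hmesh).le hx)
  rw [rightSumError, Nat.Ioc_succ_singleton, sum_singleton, Nat.cast_succ]
  calc |h * f ((a + 1) * h) - ∫ x in a * h..(a + 1) * h, f x|
      ≤ |h * f ((a + 1) * h)| + |∫ x in a * h..(a + 1) * h, f x| := abs_sub _ _
    _ ≤ h * C + C * h := by
        rw [Real.norm_eq_abs, show (a + 1) * h - a * h = h by ring, abs_of_nonneg hh] at hint
        rw [abs_mul, abs_of_nonneg hh]
        gcongr
    _ = 2 * h * C := by ring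

end RightRiemannSum

noncomputable def logTwoSin (t : ℝ) : ℝ := Real.log |2 * Real.sin t|

lemma logTwoSin_pi_sub (t : ℝ) : logTwoSin (π - t) = logTwoSin t := by
  rw [logTwoSin, logTwoSin, Real.sin_pi_sub]

lemma logTwoSin_le_log_two (t : ℝ) : logTwoSin t ≤ Real.log 2 := by
  rcases (abs_nonneg (2 * Real.sin t)).eq_or_lt with h | h
  · rw [logTwoSin, ← h, Real.log_zero]
    exact Real.log_nonneg one_le_two
  · refine Real.log_le_log h ?_
    rw [abs_mul, abs_two]
    linarith [Real.abs_sin_le_one t]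

lemma intervalIntegrable_logTwoSin_comp (α β a b : ℝ) :
    IntervalIntegrable (fun t => logTwoSin (α * t + β)) volume a b := by
  have hmero : MeromorphicOn (fun t => 2 * Real.sin (α * t + β)) (uIcc a b) :=
    fun t _ => (analyticAt_const.mul (Real.analyticAt_sin.comp (by fun_prop))).meromorphicAt
  have heq : Real.log ∘ (fun t => 2 * Real.sin (α * t + β)) = fun t => logTwoSin (α * t + β) := by
    ext t
    exact (Real.log_abs _).symm
  exact heq ▸ hmero.intervalIntegrable_log

lemma intervalIntegrable_logTwoSin (a b : ℝ) : IntervalIntegrable logTwoSin volume a b := by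
  simpa using intervalIntegrable_logTwoSin_comp 1 0 a b

lemma logTwoSin_le_logTwoSin {t s : ℝ} (ht : 0 < t) (hts : t ≤ s) (hs : s ≤ π - t) :
    logTwoSin t ≤ logTwoSin s := by
  have hsin_t : 0 < Real.sin t := Real.sin_pos_of_pos_of_lt_pi ht (by linarith [Real.pi_pos])
  have hsin : Real.sin t ≤ Real.sin s := by
    have h1 : 0 ≤ Real.sin ((s - t) / 2) :=
      Real.sin_nonneg_of_nonneg_of_le_pi (by linarith) (by linarith)
    have h2 : 0 ≤ Real.cos ((s + t) / 2) := Real.cos_nonneg_of_mem_Icc ⟨by linarith, by linarith⟩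
    nlinarith [Real.sin_sub_sin s t]
  refine Real.log_le_log (by positivity) ?_
  rw [abs_of_pos (by positivity), abs_of_pos (by linarith)]
  linarith

lemma monotoneOn_logTwoSin : MonotoneOn logTwoSin (Ioc 0 (π / 2)) :=
  fun t ht s hs hts => logTwoSin_le_logTwoSin ht.1 hts (by linarith [hs.2, ht.2])

lemma antitoneOn_logTwoSin : AntitoneOn logTwoSin (Ico (π / 2) π) := by
  intro t ht s hs hts
  rw [← logTwoSin_pi_sub s]
  exact logTwoSin_le_logTwoSin (by linarith [hs.2]) (by linarith [ht.1]) (by linarith)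

lemma lob_eq_neg_integral (x : ℝ) : lob x = -∫ t in (0 : ℝ)..x, logTwoSin t := rfl

lemma lob_sub_lob (a b : ℝ) : lob a - lob b = ∫ t in a..b, logTwoSin t := by
  rw [← integral_interval_sub_left (intervalIntegrable_logTwoSin 0 b)
    (intervalIntegrable_logTwoSin 0 a)]
  simp only [lob, logTwoSin]
  ring

lemma lob_zero : lob 0 = 0 := by simp [lob]

lemma continuous_lob : Continuous lob :=
  (continuous_primitive intervalIntegrable_logTwoSin 0).neg

lemma lob_pi_div_two : lob (π / 2) = 0 := by
  have hlog : ∫ t in (0 : ℝ)..π / 2, logTwoSin t =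
      ∫ t in (0 : ℝ)..π / 2, (Real.log 2 + (Real.log ∘ Real.sin) t) := by
    refine integral_congr_ae (Eventually.of_forall fun t ht => ?_)
    rw [uIoc_of_le (by positivity)] at ht
    have : 0 < Real.sin t := Real.sin_pos_of_pos_of_lt_pi ht.1 (by linarith [ht.2, Real.pi_pos])
    rw [logTwoSin, abs_of_pos (by positivity), Real.log_mul two_ne_zero this.ne']
    rfl
  rw [lob_eq_neg_integral, neg_eq_zero, hlog,
    integral_add intervalIntegrable_const intervalIntegrable_log_sin, Function.comp_def,
    integral_log_sin_zero_pi_div_two, intervalIntegral.integral_const, smul_eq_mul]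
  ring

lemma integral_logTwoSin_pi_sub (a b : ℝ) :
    ∫ t in (π - b)..(π - a), logTwoSin t = ∫ t in a..b, logTwoSin t := by
  rw [← integral_comp_sub_left logTwoSin π]
  simp only [logTwoSin_pi_sub]

lemma integral_logTwoSin_symmetric (c : ℝ) : ∫ t in c..(π - c), logTwoSin t = 2 * lob c := by
  have hreflect := integral_logTwoSin_pi_sub c (π / 2)
  rw [show π - π / 2 = π / 2 by ring] at hreflect
  rw [← integral_add_adjacent_intervals (intervalIntegrable_logTwoSin c (π / 2))
    (intervalIntegrable_logTwoSin _ _), hreflect, ← lob_sub_lob, lob_pi_div_two]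
  ring

lemma lob_sub_lob_le_of_le {a c m : ℝ} (ha : 0 ≤ a) (hm : 0 ≤ m) (hac : a ≤ c)
    (hc : 2 * c + m ≤ π) : lob a - lob c ≤ lob (a + m) - lob (c + m) := by
  rw [lob_sub_lob, lob_sub_lob, ← integral_comp_add_right]
  refine integral_mono_on_of_le_Ioo hac (intervalIntegrable_logTwoSin a c)
    (by simpa using intervalIntegrable_logTwoSin_comp 1 m a c) fun t ht => ?_
  exact logTwoSin_le_logTwoSin (by linarith [ht.1]) (by linarith [ht.1, ht.2]) (by linarith [ht.2])

lemma lob_sub_lob_add_le {a m : ℝ} (ha : 0 ≤ a) (hm : 0 ≤ m) (hs : a + m ≤ π) :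
    lob a - lob (a + m) ≤ 2 * lob ((π - m) / 2) := by
  set c := (π - m) / 2 with hc_def
  have hc : 2 * c + m = π := by rw [hc_def]; ring
  have hcentre : lob c - lob (c + m) = 2 * lob c := by
    rw [lob_sub_lob, show c + m = π - c by linarith, integral_logTwoSin_symmetric]
  rcases le_total a c with hac | hca
  · linarith [lob_sub_lob_le_of_le ha hm hac hc.le]
  · have hreflect : lob a - lob (a + m) = lob (π - a - m) - lob (π - a - m + m) := by
      rw [lob_sub_lob, lob_sub_lob, ← integral_logTwoSin_pi_sub]
      ring_nf
    linarith [lob_sub_lob_le_of_le (a := π - a - m) (by linarith) hm (by linarith) hc.le]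

lemma logTwoSin_eq_add {s : ℝ} (h0 : 0 < s) (h1 : s < π) :
    logTwoSin s = logTwoSin (s / 2) + logTwoSin (π / 2 - s / 2) := by
  have hsin : 0 < Real.sin (s / 2) := Real.sin_pos_of_pos_of_lt_pi (by linarith) (by linarith)
  have hcos : 0 < Real.cos (s / 2) := Real.cos_pos_of_mem_Ioo ⟨by linarith, by linarith⟩
  have hdouble : Real.sin s = 2 * Real.sin (s / 2) * Real.cos (s / 2) := by
    rw [← Real.sin_two_mul]
    ring_nf
  rw [logTwoSin, logTwoSin, logTwoSin, Real.sin_pi_div_two_sub, ← Real.log_mul (by positivity)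
    (by positivity), ← abs_mul, hdouble]
  ring_nf

lemma lob_add_four_lob_sub_eq (m : ℝ) :
    lob m + 4 * lob ((π - m) / 2) - 4 * lob (π / 4) =
      ∫ s in m..π / 2, (logTwoSin s - 2 * logTwoSin (π / 2 - s / 2)) := by
  have hsub : ∫ s in m..π / 2, logTwoSin (π / 2 - s / 2) =
      2 * (lob (π / 4) - lob ((π - m) / 2)) := by
    rw [integral_comp_sub_div (f := logTwoSin) two_ne_zero, lob_sub_lob, smul_eq_mul]
    ring_nf
  have hint : IntervalIntegrable (fun s => logTwoSin (π / 2 - s / 2)) volume m (π / 2) := by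
    simpa [sub_eq_add_neg, add_comm, div_eq_inv_mul] using
      intervalIntegrable_logTwoSin_comp (-(1 / 2)) (π / 2) m (π / 2)
  rw [integral_sub (intervalIntegrable_logTwoSin _ _) (hint.const_mul 2),
    intervalIntegral.integral_const_mul, hsub, ← lob_sub_lob, lob_pi_div_two]
  ring

lemma lob_add_four_lob_le {m : ℝ} (h0 : 0 ≤ m) (h1 : m ≤ π) :
    lob m + 4 * lob ((π - m) / 2) ≤ 4 * lob (π / 4) := by
  have hint : IntervalIntegrable (fun s => logTwoSin s - 2 * logTwoSin (π / 2 - s / 2)) volume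
      m (π / 2) := by
    refine (intervalIntegrable_logTwoSin _ _).sub (IntervalIntegrable.const_mul ?_ 2)
    simpa [sub_eq_add_neg, add_comm, div_eq_inv_mul] using
      intervalIntegrable_logTwoSin_comp (-(1 / 2)) (π / 2) m (π / 2)
  suffices ∫ s in m..π / 2, (logTwoSin s - 2 * logTwoSin (π / 2 - s / 2)) ≤ 0 by
    linarith [lob_add_four_lob_sub_eq m]
  rcases le_total m (π / 2) with hm | hm
  · calc _ ≤ ∫ _ in m..π / 2, (0 : ℝ) :=
          integral_mono_on_of_le_Ioo hm hint intervalIntegrable_const fun s hs => ?_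
      _ = 0 := integral_zero
    rw [logTwoSin_eq_add (by linarith [hs.1]) (by linarith [hs.2, Real.pi_pos])]
    linarith [logTwoSin_le_logTwoSin (t := s / 2) (s := π / 2 - s / 2) (by linarith [hs.1])
      (by linarith [hs.2]) (by linarith [hs.1])]
  · rw [integral_symm, neg_nonpos]
    calc (0 : ℝ) = ∫ _ in π / 2..m, (0 : ℝ) := integral_zero.symm
      _ ≤ _ := integral_mono_on_of_le_Ioo hm intervalIntegrable_const hint.symm fun s hs => ?_
    rw [logTwoSin_eq_add (by linarith [hs.1, Real.pi_pos]) (by linarith [hs.2])]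
    linarith [logTwoSin_le_logTwoSin (t := π / 2 - s / 2) (s := s / 2) (by linarith [hs.2])
      (by linarith [hs.1]) (by linarith [hs.1])]

lemma lob_add_two_mul_lob_sub_lob_le {a m : ℝ} (ha : 0 ≤ a) (hm : 0 ≤ m) (hs : a + m ≤ π) :
    lob m + 2 * (lob a - lob (a + m)) ≤ 4 * lob (π / 4) := by
  linarith [lob_sub_lob_add_le ha hm hs, lob_add_four_lob_le hm (by linarith)]

lemma lob_pi_div_four_nonneg : 0 ≤ lob (π / 4) := by
  simpa [lob_zero] using lob_add_two_mul_lob_sub_lob_le le_rfl le_rfl (by linarith [Real.pi_pos])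

lemma mul_abs_logTwoSin_le {h : ℝ} (h0 : 0 < h) (h1 : h ≤ π / 2) :
    h * |logTwoSin h| ≤ |lob h| + h * Real.log 2 := by
  have hlow : -lob h ≤ h * logTwoSin h := by
    have hcell : ∫ t in (0 : ℝ)..h, logTwoSin t ≤ ∫ _ in (0 : ℝ)..h, logTwoSin h :=
      integral_mono_on_of_le_Ioo h0.le (intervalIntegrable_logTwoSin 0 h) intervalIntegrable_const
        fun t ht => logTwoSin_le_logTwoSin ht.1 ht.2.le (by linarith [ht.2])
    rw [intervalIntegral.integral_const, smul_eq_mul, sub_zero] at hcell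
    rw [lob_eq_neg_integral]
    linarith
  have hup := mul_le_mul_of_nonneg_left (logTwoSin_le_log_two h) h0.le
  rw [← abs_of_pos h0, ← abs_mul, abs_of_pos h0, abs_le]
  constructor <;> linarith [le_abs_self (lob h), abs_nonneg (lob h),
    mul_nonneg h0.le (Real.log_nonneg one_le_two)]

lemma abs_logTwoSin_le {h t : ℝ} (hh : 0 < h) (ht : t ∈ Icc h (π - h)) :
    |logTwoSin t| ≤ Real.log 2 + |logTwoSin h| := by
  rw [abs_le]
  constructor
  · linarith [logTwoSin_le_logTwoSin hh ht.1 ht.2, neg_abs_le (logTwoSin h),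
      Real.log_nonneg one_le_two]
  · linarith [logTwoSin_le_log_two t, abs_nonneg (logTwoSin h)]

lemma abs_rightSumError_logTwoSin_zero_one_le {h : ℝ} (hh : 0 ≤ h) :
    |rightSumError logTwoSin h 0 1| ≤ |lob h| + h * (Real.log 2 + |logTwoSin h|) := by
  have : rightSumError logTwoSin h 0 1 = h * logTwoSin h + lob h := by
    simp [rightSumError, lob_eq_neg_integral]
    ring
  rw [this]
  refine (abs_add_le _ _).trans ?_
  rw [abs_mul, abs_of_nonneg hh]
  nlinarith [Real.log_nonneg one_le_two]

noncomputable def cellBound (n : ℕ) : ℝ := π / n * (Real.log 2 + |logTwoSin (π / n)|)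

noncomputable def gridError (n : ℕ) : ℝ := |lob (π / n)| + 5 * cellBound n

section Grid

variable {n : ℕ}

lemma natCast_mul_pi_div_le {i j : ℕ} (hij : i ≤ j) : (i : ℝ) * (π / n) ≤ j * (π / n) :=
  mul_le_mul_of_nonneg_right (by exact_mod_cast hij) (by positivity)

lemma abs_rightSumError_logTwoSin_one_le {j : ℕ} (hj : 1 ≤ j) (hjn : 2 * j ≤ n) :
    |rightSumError logTwoSin (π / n) 1 j| ≤ cellBound n := by
  have hn : (0 : ℝ) < n := by exact_mod_cast (show 0 < n by omega)
  have hh : 0 < π / n := by positivity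
  have hjh : (j : ℝ) * (π / n) ≤ π / 2 := by
    have := natCast_mul_pi_div_le (n := n) hjn
    rw [mul_div_cancel₀ _ hn.ne'] at this
    push_cast at this
    linarith
  have hmono := monotoneOn_logTwoSin.mono fun t (ht : t ∈ Icc ((1 : ℕ) * (π / n)) (j * (π / n))) =>
    ⟨by push_cast at ht; linarith [ht.1], by linarith [ht.2]⟩
  refine (hmono.abs_rightSumError_le hh hj).trans ?_
  rw [Nat.cast_one, one_mul, cellBound]
  gcongr
  linarith [logTwoSin_le_log_two (j * (π / n)), neg_abs_le (logTwoSin (π / n))]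

lemma abs_rightSumError_logTwoSin_le_of_le_two_mul {i j : ℕ} (hi : n ≤ 2 * i) (hij : i ≤ j)
    (hj : j < n) : |rightSumError logTwoSin (π / n) i j| ≤ cellBound n := by
  have hn : (0 : ℝ) < n := by exact_mod_cast (show 0 < n by omega)
  have hh : 0 < π / n := by positivity
  have hih : π / 2 ≤ (i : ℝ) * (π / n) := by
    have := natCast_mul_pi_div_le (n := n) hi
    rw [mul_div_cancel₀ _ hn.ne'] at this
    push_cast at this
    linarith
  have hjh : (j : ℝ) * (π / n) ≤ π - π / n := by
    have := natCast_mul_pi_div_le (n := n) (show j + 1 ≤ n from hj)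
    rw [mul_div_cancel₀ _ hn.ne'] at this
    push_cast at this
    linarith
  have hanti := antitoneOn_logTwoSin.mono fun t (ht : t ∈ Icc ((i : ℕ) * (π / n)) (j * (π / n))) =>
    ⟨by linarith [ht.1], by linarith [ht.2]⟩
  refine (hanti.abs_rightSumError_le hh hij).trans ?_
  rw [cellBound]
  gcongr
  have hj1 : π / n ≤ (j : ℝ) * (π / n) := by
    simpa using natCast_mul_pi_div_le (n := n) (show 1 ≤ j by omega)
  linarith [logTwoSin_le_log_two (i * (π / n)), neg_abs_le (logTwoSin (π / n)),
    logTwoSin_le_logTwoSin hh hj1 hjh]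

lemma abs_rightSumError_logTwoSin_half_le (hn : 3 ≤ n) :
    |rightSumError logTwoSin (π / n) (n / 2) (n / 2 + 1)| ≤ 2 * cellBound n := by
  have hn0 : (0 : ℝ) < n := by positivity
  have hh : 0 < π / n := by positivity
  rw [cellBound, ← mul_assoc]
  refine abs_rightSumError_succ_le hh.le fun t ht => abs_logTwoSin_le hh ⟨?_, ?_⟩
  · simpa using (natCast_mul_pi_div_le (n := n) (show 1 ≤ n / 2 by omega)).trans ht.1
  · have := natCast_mul_pi_div_le (n := n) (show n / 2 + 2 ≤ n by omega)
    rw [mul_div_cancel₀ _ hn0.ne'] at this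
    push_cast at this
    linarith [ht.2]

lemma abs_rightSumError_logTwoSin_le {k : ℕ} (hk : k < n) :
    |rightSumError logTwoSin (π / n) 0 k| ≤ gridError n := by
  have hint := intervalIntegrable_logTwoSin
  have hcell : 0 ≤ cellBound n := by
    have := Real.log_nonneg one_le_two
    unfold cellBound
    positivity
  have hfirst : |rightSumError logTwoSin (π / n) 0 1| ≤ |lob (π / n)| + cellBound n :=
    abs_rightSumError_logTwoSin_zero_one_le (by positivity)
  rw [gridError]
  rcases Nat.eq_zero_or_pos k with rfl | hk0
  · simp only [rightSumError, Finset.Ioc_self, sum_empty, mul_zero, integral_same, sub_zero,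
      abs_zero]
    positivity
  rcases le_or_gt (2 * k) n with hkn | hkn
  · rw [← rightSumError_add zero_le_one hk0 hint]
    have := abs_add_le (rightSumError logTwoSin (π / n) 0 1) (rightSumError logTwoSin (π / n) 1 k)
    linarith [abs_rightSumError_logTwoSin_one_le hk0 hkn]
  -- split `[0, k]` at `1`, `n / 2` and `n / 2 + 1`: the first cell carries the logarithmic
  -- singularity and the middle cell contains the maximum `π / 2` of `logTwoSin`
  set p := n / 2
  set R := rightSumError logTwoSin (π / n)
  have hsplit : R 0 k = R 0 1 + R 1 p + R p (p + 1) + R (p + 1) k := by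
    rw [rightSumError_add zero_le_one (by omega) hint, rightSumError_add (Nat.zero_le p)
      p.le_succ hint, rightSumError_add (Nat.zero_le _) (by omega) hint]
  rw [hsplit]
  have := abs_add_le (R 0 1) (R 1 p)
  have := abs_add_le (R 0 1 + R 1 p) (R p (p + 1))
  have := abs_add_le (R 0 1 + R 1 p + R p (p + 1)) (R (p + 1) k)
  linarith [abs_rightSumError_logTwoSin_one_le (n := n) (j := p) (by omega) (by omega),
    abs_rightSumError_logTwoSin_half_le (n := n) (by omega),
    abs_rightSumError_logTwoSin_le_of_le_two_mul (i := p + 1) (by omega) (by omega) hk]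

end Grid

lemma gridError_nonneg (n : ℕ) : 0 ≤ gridError n := by
  have := Real.log_nonneg one_le_two
  unfold gridError cellBound
  positivity

lemma tendsto_gridError : Tendsto gridError atTop (𝓝 0) := by
  have hstep : Tendsto (fun n : ℕ => π / n) atTop (𝓝 0) :=
    tendsto_const_div_atTop_nhds_zero_nat π
  have hlob : Tendsto (fun n : ℕ => |lob (π / n)|) atTop (𝓝 0) := by
    simpa [lob_zero] using ((continuous_lob.tendsto 0).comp hstep).abs
  have hupper : Tendsto (fun n : ℕ => 6 * |lob (π / n)| + 10 * (π / n) * Real.log 2) atTop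
      (𝓝 0) := by
    simpa using (hlob.const_mul 6).add ((hstep.const_mul 10).mul_const (Real.log 2))
  refine tendsto_of_tendsto_of_tendsto_of_le_of_le' tendsto_const_nhds hupper
    (Eventually.of_forall gridError_nonneg) ?_
  filter_upwards [eventually_ge_atTop 2] with n hn
  have hn' : (2 : ℝ) ≤ n := by exact_mod_cast hn
  have hh : 0 < π / n := by positivity
  have := mul_abs_logTwoSin_le hh
    (by rw [div_le_div_iff₀ (by positivity) two_pos]; nlinarith [Real.pi_pos])
  unfold gridError cellBound
  nlinarith

noncomputable def logNormQf (n k : ℕ) : ℝ := ∑ j ∈ Ioc 0 k, logTwoSin (j * (π / n))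

lemma norm_qf {n k : ℕ} (hk : k < n) : ‖qf n k‖ = Real.exp (logNormQf n k) := by
  rw [qf, norm_prod, logNormQf, Real.exp_sum, ← Finset.Icc_add_one_left_eq_Ioc, zero_add]
  refine prod_congr rfl fun j hj => ?_
  rw [Finset.mem_Icc] at hj
  have hn : (0 : ℝ) < n := by exact_mod_cast (show 0 < n by omega)
  have hlt : (j : ℝ) * (π / n) < π := by
    rw [← mul_div_assoc, div_lt_iff₀ hn]
    have : (j : ℝ) < n := by exact_mod_cast (show j < n by omega)
    nlinarith [Real.pi_pos]
  have hsin : 0 < Real.sin (j * (π / n)) :=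
    Real.sin_pos_of_pos_of_lt_pi (mul_pos (by exact_mod_cast hj.1) (by positivity)) hlt
  have harg : (j : ℂ) * π / n = ((j * (π / n) : ℝ) : ℂ) := by push_cast; ring
  rw [harg, ← Complex.ofReal_sin, norm_mul, norm_mul, Complex.norm_I, Complex.norm_two,
    Complex.norm_real, Real.norm_eq_abs, logTwoSin, Real.exp_log (by positivity), abs_mul,
    abs_two]
  ring

lemma abs_pi_div_mul_logNormQf_add_lob_le {n k : ℕ} (hk : k < n) :
    |π / n * logNormQf n k + lob (k * (π / n))| ≤ gridError n := by
  have hsum : rightSumError logTwoSin (π / n) 0 k =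
      π / n * logNormQf n k + lob (k * (π / n)) := by
    simp [rightSumError, logNormQf, lob_eq_neg_integral, sub_eq_add_neg]
  exact hsum ▸ abs_rightSumError_logTwoSin_le hk

section Weave

variable {n : ℕ}

lemma pi_div_mul_logNormQf_sub_le {x m : ℕ} (hxm : x + m < n) :
    π / n * (2 * logNormQf n (x + m) - 2 * logNormQf n x - logNormQf n m) ≤
      4 * lob (π / 4) + 5 * gridError n := by
  have h1 := abs_le.1 (abs_pi_div_mul_logNormQf_add_lob_le hxm)
  have h2 := abs_le.1 (abs_pi_div_mul_logNormQf_add_lob_le (show x < n by omega))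
  have h3 := abs_le.1 (abs_pi_div_mul_logNormQf_add_lob_le (show m < n by omega))
  have hfit : (x : ℝ) * (π / n) + m * (π / n) ≤ π := by
    have := natCast_mul_pi_div_le (n := n) hxm.le
    rwa [mul_div_cancel₀ _ (by exact_mod_cast (show n ≠ 0 by omega)), Nat.cast_add,
      add_mul] at this
  have hlob := lob_add_two_mul_lob_sub_lob_le (by positivity) (by positivity) hfit
  push_cast at h1
  rw [add_mul] at h1
  linarith

lemma norm_qf_add_sq_div_le {x m : ℕ} (hxm : x + m < n) :
    ‖qf n (x + m)‖ ^ 2 / (‖qf n x‖ ^ 2 * ‖qf n m‖) ≤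
      Real.exp (n / π * (4 * lob (π / 4) + 5 * gridError n)) := by
  rw [norm_qf hxm, norm_qf (show x < n by omega), norm_qf (show m < n by omega),
    ← Real.exp_nat_mul, ← Real.exp_nat_mul, ← Real.exp_add, ← Real.exp_sub, Real.exp_le_exp]
  have hn : (0 : ℝ) < n := by exact_mod_cast (show 0 < n by omega)
  have hpi : 0 < π / n := by positivity
  calc _ = (π / n)⁻¹ *
        (π / n * (2 * logNormQf n (x + m) - 2 * logNormQf n x - logNormQf n m)) := by
        field_simp
        push_cast
        ring
    _ ≤ (π / n)⁻¹ * (4 * lob (π / 4) + 5 * gridError n) := by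
        gcongr
        exact pi_div_mul_logNormQf_sub_le hxm
    _ = _ := by rw [inv_div]

noncomputable def weaveSummand (n m a b c d : ℕ) : ℂ :=
  Complex.exp (2 * Real.pi * Complex.I * ((a : ℂ) - c) * ((d : ℂ) - b) / n) *
    ((qf n m)⁻¹) ^ 4 *
    ((qf n (a + m) * qf n (b + m) * qf n (c + m) * qf n (d + m)) /
        (qf n a * qf n b * qf n c * qf n d)) ^ 2

lemma norm_weaveSummand_le {m a b c d : ℕ} (ha : a + m < n) (hb : b + m < n)
    (hc : c + m < n) (hd : d + m < n) :
    ‖weaveSummand n m a b c d‖ ≤ Real.exp (n / π * (4 * lob (π / 4) + 5 * gridError n)) ^ 4 := by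
  have hphase : ‖Complex.exp (2 * π * Complex.I * ((a : ℂ) - c) * ((d : ℂ) - b) / n)‖ = 1 := by
    rw [← Complex.norm_exp_ofReal_mul_I (2 * π * (a - c) * (d - b) / n)]
    push_cast
    ring_nf
  have hsplit : ‖weaveSummand n m a b c d‖ =
      ‖qf n (a + m)‖ ^ 2 / (‖qf n a‖ ^ 2 * ‖qf n m‖) *
        (‖qf n (b + m)‖ ^ 2 / (‖qf n b‖ ^ 2 * ‖qf n m‖)) *
        (‖qf n (c + m)‖ ^ 2 / (‖qf n c‖ ^ 2 * ‖qf n m‖)) *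
        (‖qf n (d + m)‖ ^ 2 / (‖qf n d‖ ^ 2 * ‖qf n m‖)) := by
    simp only [weaveSummand, norm_mul, norm_pow, norm_div, norm_inv, hphase]
    ring
  rw [hsplit, show ∀ B : ℝ, B ^ 4 = B * B * B * B by intro B; ring]
  gcongr
  exacts [norm_qf_add_sq_div_le ha, norm_qf_add_sq_div_le hb, norm_qf_add_sq_div_le hc,
    norm_qf_add_sq_div_le hd]

lemma norm_F_le :
    ‖F n‖ ≤ n ^ 5 * Real.exp (n / π * (4 * lob (π / 4) + 5 * gridError n)) ^ 4 := by
  set B := Real.exp (n / π * (4 * lob (π / 4) + 5 * gridError n)) ^ 4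
  have hsum : ∀ {s : Finset ℕ} {f : ℕ → ℂ} {C : ℝ}, s ⊆ range n → 0 ≤ C →
      (∀ i ∈ s, ‖f i‖ ≤ C) → ‖∑ i ∈ s, f i‖ ≤ n * C := fun hs hC h =>
    norm_sum_le_of_card_le ((Finset.card_le_card hs).trans (card_range n).le) hC h
  rw [show (n : ℝ) ^ 5 * B = n * (n * (n * (n * (n * B)))) by ring, F]
  refine hsum subset_rfl (by positivity) fun m _ => ?_
  refine hsum (range_subset_range.2 (Nat.sub_le n m)) (by positivity) fun a ha => ?_
  refine hsum (range_subset_range.2 (Nat.sub_le n m)) (by positivity) fun b hb => ?_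
  refine hsum (range_subset_range.2 (Nat.sub_le n m)) (by positivity) fun c hc => ?_
  refine hsum (range_subset_range.2 (Nat.sub_le n m)) (by positivity) fun d hd => ?_
  simp only [Finset.mem_range] at ha hb hc hd
  exact norm_weaveSummand_le (by omega) (by omega) (by omega) (by omega)

end Weave

lemma two_pi_div_mul_log_norm_F_le {n : ℕ} (hn : 0 < n) :
    2 * π / n * Real.log ‖F n‖ ≤
      32 * lob (π / 4) + 40 * gridError n + 10 * π * (Real.log n / n) := by
  have hn0 : (0 : ℝ) < n := by exact_mod_cast hn
  set E := n / π * (4 * lob (π / 4) + 5 * gridError n)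
  have hE : 0 ≤ E := by
    have := lob_pi_div_four_nonneg
    have := gridError_nonneg n
    positivity
  have hlog : Real.log ‖F n‖ ≤ 5 * Real.log n + 4 * E := by
    have hbound : Real.log ((n : ℝ) ^ 5 * Real.exp E ^ 4) = 5 * Real.log n + 4 * E := by
      rw [Real.log_mul (by positivity) (by positivity), Real.log_pow, Real.log_pow, Real.log_exp]
      push_cast
      ring
    rcases (norm_nonneg (F n)).eq_or_lt with h | h
    · rw [← h, Real.log_zero]
      have := Real.log_nonneg (show (1 : ℝ) ≤ n by exact_mod_cast hn)
      linarith
    · exact hbound ▸ Real.log_le_log h norm_F_le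
  calc 2 * π / n * Real.log ‖F n‖ ≤ 2 * π / n * (5 * Real.log n + 4 * E) := by gcongr
    _ = _ := by
      simp only [E]
      field_simp
      ring

theorem limsup_volume_upper_bound :
    Filter.limsup (fun n : ℕ => (2 * Real.pi / n) * Real.log (‖F n‖))
      Filter.atTop ≤ 32 * lob (Real.pi / 4) := by
  have hlog : Tendsto (fun n : ℕ => Real.log n / n) atTop (𝓝 0) :=
    Real.isLittleO_log_id_atTop.tendsto_div_nhds_zero.comp tendsto_natCast_atTop_atTop
  have hbound : Tendsto
      (fun n : ℕ => 32 * lob (π / 4) + 40 * gridError n + 10 * π * (Real.log n / n))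
      atTop (𝓝 (32 * lob (π / 4))) := by
    simpa using (tendsto_gridError.const_mul 40).const_add (32 * lob (π / 4)) |>.add
      (hlog.const_mul (10 * π))
  refine limsup_le_of_eventually_le_of_tendsto (by linarith [lob_pi_div_four_nonneg]) ?_ hbound
  filter_upwards [eventually_gt_atTop 0] with n hn
  exact two_pi_div_mul_log_norm_F_le hn
end

section
/- For every integer n ≥ 4, F_n ≥ ( ∏_{j=⌊n/4⌋+1}^{⌊n/4⌋+⌊n/2⌋} 2·sin(jπ/n) )⁸ / ( ∏_{j=1}^{⌊n/2⌋} 2·sin(jπ/n) )⁴, and in particular F_n > 0. [The single-term lower bound (6.9) in the proof of Theorem 6.2, obtained by keeping only the summand with m = ⌊n/2⌋, a = b = c = d = ⌊n/4⌋.] -/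
open Finset Filter Real Complex

/-!
Writing `{k}!_n = i^k · S_k` with `S_k = ∏_{j ≤ k} 2 sin(jπ/n)` real, the powers of `i` cancel
in each summand of `F_n` (they enter as `i^{8m}`), and the phase `e^{2πi(a-c)(d-b)/n}` factors
as `e^{2πi(a-c)d/n}` times the conjugate of `e^{2πi(a-c)b/n}`. Summing over `b` and `d`
therefore produces `|∑_d e^{2πi(a-c)d/n} t_d|²` with real weights `t_x = (S_{x+m}/S_x)²`, so
`F_n` is a sum of nonnegative reals. It is bounded below by its single term `m = ⌊n/2⌋`,
`a = c = ⌊n/4⌋`, in which the phase sum is `∑_d t_d ≥ t_a` and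
`t_a = (∏_{j=a+1}^{a+m} 2 sin(jπ/n))²`.
-/

open ComplexConjugate

lemma Complex.sum_sum_mul_conj_eq_normSq {ι : Type*} (s : Finset ι) (f : ι → ℂ) :
    ∑ b ∈ s, ∑ d ∈ s, f d * conj (f b) = (normSq (∑ d ∈ s, f d) : ℂ) := by
  rw [← mul_conj, map_sum, sum_mul_sum, sum_comm]

lemma two_mul_sin_pos_of_lt {n j : ℕ} (hj : 0 < j) (hjn : j < n) :
    0 < 2 * Real.sin (j * π / n) := by
  have hj' : (0 : ℝ) < j := by exact_mod_cast hj
  have hjn' : (j : ℝ) < n := by exact_mod_cast hjn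
  have hpos : 0 < Real.sin (j * π / n) := by
    apply Real.sin_pos_of_pos_of_lt_pi (div_pos (mul_pos hj' Real.pi_pos) (hj'.trans hjn'))
    rw [div_lt_iff₀ (hj'.trans hjn')]
    nlinarith [Real.pi_pos]
  linarith

noncomputable def sinFactorial (n k : ℕ) : ℝ := ∏ j ∈ Icc 1 k, 2 * Real.sin (j * π / n)

lemma sinFactorial_pos {n k : ℕ} (hk : k < n) : 0 < sinFactorial n k :=
  prod_pos fun _ hj => two_mul_sin_pos_of_lt (mem_Icc.1 hj).1 ((mem_Icc.1 hj).2.trans_lt hk)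

lemma sinFactorial_add (n a m : ℕ) :
    sinFactorial n (a + m) =
      sinFactorial n a * ∏ j ∈ Icc (a + 1) (a + m), 2 * Real.sin (j * π / n) := by
  rw [Icc_add_one_left_eq_Ioc]
  exact (prod_Ioc_consecutive _ (Nat.zero_le a) (Nat.le_add_right a m)).symm

lemma qf_eq_I_pow_mul_sinFactorial (n k : ℕ) : qf n k = I ^ k * (sinFactorial n k : ℂ) := by
  have hfactor : ∀ j ∈ Icc 1 k, 2 * I * Complex.sin ((j : ℂ) * π / n)
      = I * ((2 * Real.sin (j * π / n) : ℝ) : ℂ) := by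
    intro j _
    push_cast
    ring
  rw [qf, prod_congr rfl hfactor, prod_mul_distrib, prod_const, Nat.card_Icc, Nat.add_sub_cancel,
    sinFactorial, ofReal_prod]

lemma qf_add_div_qf (n m x : ℕ) :
    qf n (x + m) / qf n x = I ^ m * ((sinFactorial n (x + m) / sinFactorial n x : ℝ) : ℂ) := by
  rw [qf_eq_I_pow_mul_sinFactorial, qf_eq_I_pow_mul_sinFactorial, pow_add, mul_comm (I ^ x),
    mul_assoc, mul_div_assoc, mul_div_mul_left _ _ (pow_ne_zero x I_ne_zero), ofReal_div]

section StateSum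

variable (n m : ℕ)

noncomputable def weight (x : ℕ) : ℝ := (sinFactorial n (x + m) / sinFactorial n x) ^ 2

lemma weight_nonneg (x : ℕ) : 0 ≤ weight n m x := sq_nonneg _

noncomputable def phaseSum (a c : ℕ) : ℂ :=
  ∑ d ∈ range (n - m), exp (2 * π * I * ((a : ℂ) - c) * d / n) * (weight n m d : ℂ)

noncomputable def stateTerm (a c : ℕ) : ℝ :=
  (sinFactorial n m ^ 4)⁻¹ * (weight n m a * weight n m c) * normSq (phaseSum n m a c)

lemma stateTerm_nonneg (a c : ℕ) : 0 ≤ stateTerm n m a c := by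
  have := weight_nonneg n m a
  have := weight_nonneg n m c
  have := normSq_nonneg (phaseSum n m a c)
  unfold stateTerm
  positivity

lemma F_summand_eq (a b c d : ℕ) :
    exp (2 * π * I * ((a : ℂ) - c) * ((d : ℂ) - b) / n) * ((qf n m)⁻¹) ^ 4 *
        ((qf n (a + m) * qf n (b + m) * qf n (c + m) * qf n (d + m)) /
          (qf n a * qf n b * qf n c * qf n d)) ^ 2
      = ((sinFactorial n m ^ 4)⁻¹ * (weight n m a * weight n m c) : ℝ) *
        (exp (2 * π * I * ((a : ℂ) - c) * d / n) * (weight n m d : ℂ) *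
          conj (exp (2 * π * I * ((a : ℂ) - c) * b / n) * (weight n m b : ℂ))) := by
  have hphase : exp (2 * π * I * ((a : ℂ) - c) * ((d : ℂ) - b) / n)
      = exp (2 * π * I * ((a : ℂ) - c) * d / n) *
          conj (exp (2 * π * I * ((a : ℂ) - c) * b / n)) := by
    rw [← exp_conj, ← Complex.exp_add]
    congr 1
    simp only [map_div₀, map_mul, map_sub, conj_I, conj_ofReal, map_natCast, map_ofNat]
    ring
  have hI4 : (I ^ m) ^ 4 = 1 := by rw [← pow_mul, mul_comm, pow_mul, I_pow_four, one_pow]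
  have hquad : ∀ A B C D : ℂ,
      (I ^ m * A * (I ^ m * B) * (I ^ m * C) * (I ^ m * D)) ^ 2 = (A * B * C * D) ^ 2 :=
    fun A B C D => by linear_combination (A * B * C * D) ^ 2 * ((I ^ m) ^ 4 + 1) * hI4
  have hsplit : (qf n (a + m) * qf n (b + m) * qf n (c + m) * qf n (d + m)) /
      (qf n a * qf n b * qf n c * qf n d)
      = (qf n (a + m) / qf n a) * (qf n (b + m) / qf n b) * (qf n (c + m) / qf n c) *
        (qf n (d + m) / qf n d) := by
    rw [div_mul_div_comm, div_mul_div_comm, div_mul_div_comm]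
  rw [hphase, hsplit, qf_add_div_qf, qf_add_div_qf,
    qf_add_div_qf, qf_add_div_qf, hquad, qf_eq_I_pow_mul_sinFactorial, mul_inv, mul_pow,
    inv_pow (I ^ m), hI4, inv_one, one_mul, map_mul, conj_ofReal]
  simp only [weight]
  push_cast
  ring

lemma weight_eq_sq_prod (x : ℕ) (hx : x < n) :
    weight n m x = (∏ j ∈ Icc (x + 1) (x + m), 2 * Real.sin (j * π / n)) ^ 2 := by
  rw [weight, sinFactorial_add, mul_div_cancel_left₀ _ (sinFactorial_pos hx).ne']

lemma weight_pow_four_div_le_stateTerm_self {a : ℕ} (ha : a < n - m) :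
    weight n m a ^ 4 / sinFactorial n m ^ 4 ≤ stateTerm n m a a := by
  have hw := weight_nonneg n m a
  have hphase : phaseSum n m a a = ((∑ d ∈ range (n - m), weight n m d : ℝ) : ℂ) := by
    simp only [phaseSum, sub_self, mul_zero, zero_mul, zero_div, Complex.exp_zero, one_mul,
      ofReal_sum]
  have hsum : weight n m a ≤ ∑ d ∈ range (n - m), weight n m d :=
    single_le_sum (fun d _ => weight_nonneg n m d) (mem_range.2 ha)
  calc weight n m a ^ 4 / sinFactorial n m ^ 4
      = (sinFactorial n m ^ 4)⁻¹ * (weight n m a * weight n m a) *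
          (weight n m a * weight n m a) := by ring
    _ ≤ stateTerm n m a a := by
      rw [stateTerm, hphase, normSq_ofReal]
      exact mul_le_mul_of_nonneg_left (mul_self_le_mul_self hw hsum) (by positivity)

end StateSum

lemma F_eq_sum_stateTerm (n : ℕ) :
    F n = ((∑ m ∈ range n, ∑ a ∈ range (n - m), ∑ c ∈ range (n - m), stateTerm n m a c :
      ℝ) : ℂ) := by
  push_cast
  refine sum_congr rfl fun m _ => sum_congr rfl fun a _ => ?_
  rw [sum_comm]
  refine sum_congr rfl fun c _ => ?_
  simp only [F_summand_eq, ← mul_sum, sum_sum_mul_conj_eq_normSq, stateTerm, phaseSum]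
  push_cast
  ring

lemma stateTerm_le_sum {n m a c : ℕ} (hm : m < n) (ha : a < n - m) (hc : c < n - m) :
    stateTerm n m a c ≤
      ∑ m' ∈ range n, ∑ a' ∈ range (n - m'), ∑ c' ∈ range (n - m'),
        stateTerm n m' a' c' := by
  calc stateTerm n m a c
      ≤ ∑ c' ∈ range (n - m), stateTerm n m a c' :=
        single_le_sum (fun c' _ => stateTerm_nonneg n m a c') (mem_range.2 hc)
    _ ≤ ∑ a' ∈ range (n - m), ∑ c' ∈ range (n - m), stateTerm n m a' c' :=
        single_le_sum (fun a' _ => sum_nonneg fun c' _ => stateTerm_nonneg n m a' c')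
          (mem_range.2 ha)
    _ ≤ _ :=
        single_le_sum (f := fun m' => ∑ a' ∈ range (n - m'), ∑ c' ∈ range (n - m'),
            stateTerm n m' a' c')
          (fun m' _ => sum_nonneg fun a' _ => sum_nonneg fun c' _ => stateTerm_nonneg n m' a' c')
          (mem_range.2 hm)

theorem F_single_term_lower_bound (n : ℕ) (hn : 4 ≤ n) :
    ∃ r : ℝ, F n = (r : ℂ) ∧
      (∏ j ∈ Finset.Icc (n / 4 + 1) (n / 4 + n / 2), 2 * Real.sin (j * Real.pi / n)) ^ 8 /
          (∏ j ∈ Finset.Icc 1 (n / 2), 2 * Real.sin (j * Real.pi / n)) ^ 4 ≤ r ∧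
      0 < r := by
  have hm : n / 2 < n := by omega
  have ha : n / 4 < n - n / 2 := by omega
  have hP : 0 < ∏ j ∈ Icc (n / 4 + 1) (n / 4 + n / 2), 2 * Real.sin (j * π / n) :=
    prod_pos fun _ hj => two_mul_sin_pos_of_lt (by grind) (by grind)
  have hQ : 0 < sinFactorial n (n / 2) := sinFactorial_pos hm
  have hterm := weight_pow_four_div_le_stateTerm_self n (n / 2) ha
  rw [weight_eq_sq_prod n (n / 2) (n / 4) (by omega), ← pow_mul] at hterm
  have hsum := hterm.trans (stateTerm_le_sum hm ha ha)
  exact ⟨_, F_eq_sum_stateTerm n, hsum, lt_of_lt_of_le (by positivity) hsum⟩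
end
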